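/- arXiv:2006.10796 — 8 statements merged into one kernel-verified Lean document; each statement's English description precedes it below -/
import Mathlib

section
/- A set X ⊆ [ℕ]^ω is unbounded with respect to eventual dominance if and only if for each strictly increasing function a : ℕ → ℕ there exist an infinite set b ⊆ ℕ and an element x ∈ X such that x ∩ ⋃_{n∈b} [a(n), a(n+1)) = ∅. -/
/-- Key counting lemma: if `x` meets every interval `[a n, a (n+1))` for `n ≥ N`,
then `x j < a (N + j + 1)` for all `j`. -/
lemma key_count (a x : ℕ → ℕ) (ha : StrictMono a) (hx : StrictMono x) (N : ℕ)
    (h : ∀ n, N ≤ n → ∃ k, a n ≤ x k ∧ x k < a (n + 1)) :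
    ∀ j, x j < a (N + j + 1) := by
  intro j
  by_contra hj
  push_neg at hj
  choose k hk1 hk2 using fun i : ℕ => h (N + i) (Nat.le_add_right _ _)
  have hklt : ∀ i ≤ j, k i < j := by
    intro i hi
    by_contra h'
    push_neg at h'
    have h1 : x j ≤ x (k i) := hx.monotone h'
    have h2 : x (k i) < a (N + i + 1) := hk2 i
    have h3 : a (N + i + 1) ≤ a (N + j + 1) := ha.monotone (by omega)
    omega
  have hinj : ∀ i i', i < i' → k i ≠ k i' := by
    intro i i' hii heq
    have h1 : x (k i) < a (N + i + 1) := hk2 i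
    have h2 : a (N + i + 1) ≤ a (N + i') := ha.monotone (by omega)
    have h3 : a (N + i') ≤ x (k i') := hk1 i'
    rw [heq] at h1
    omega
  have hcard : (Finset.range (j + 1)).card ≤ (Finset.range j).card :=
    Finset.card_le_card_of_injOn k
      (fun i hi => Finset.mem_range.mpr
        (hklt i (Nat.lt_succ_iff.mp (Finset.mem_range.mp hi))))
      (fun i _ i' _ heq => by
        by_contra hne
        rcases Nat.lt_or_ge i i' with h' | h'
        · exact hinj i i' h' heq
        · exact hinj i' i (lt_of_le_of_ne h' (Ne.symm hne)) heq.symm)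
  simp only [Finset.card_range] at hcard
  omega

/-- A set `X` of (increasing enumerations of) infinite subsets of `ℕ` is unbounded with
respect to eventual dominance iff for each strictly increasing `a : ℕ → ℕ` there are an
infinite `b ⊆ ℕ` and `x ∈ X` with `x ∩ ⋃_{n ∈ b} [a(n), a(n+1)) = ∅`. -/
theorem stmt_2 (X : Set (ℕ → ℕ)) (hX : ∀ x ∈ X, StrictMono x) :
    (¬ ∃ g : ℕ → ℕ, ∀ x ∈ X, ∀ᶠ n in Filter.atTop, x n ≤ g n) ↔
      (∀ a : ℕ → ℕ, StrictMono a →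
        ∃ b : Set ℕ, b.Infinite ∧ ∃ x ∈ X,
          Set.range x ∩ ⋃ n ∈ b, Set.Ico (a n) (a (n + 1)) = ∅) := by
  constructor
  · intro hub a ha
    by_contra hcon
    push_neg at hcon
    apply hub
    refine ⟨fun k => a (2 * k + 1), ?_⟩
    intro x hx
    -- the set of intervals missed by x is finite
    have hfin : {n : ℕ | Set.range x ∩ Set.Ico (a n) (a (n + 1)) = ∅}.Finite := by
      by_contra hinf
      have hne := hcon _ hinf x hx
      obtain ⟨m, ⟨k, rfl⟩, hmU⟩ := hne
      obtain ⟨n, hnb, hn1, hn2⟩ := Set.mem_iUnion₂.mp hmU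
      have : x k ∈ Set.range x ∩ Set.Ico (a n) (a (n + 1)) :=
        ⟨⟨k, rfl⟩, hn1, hn2⟩
      rw [Set.mem_setOf_eq.mp hnb] at this
      exact this
    obtain ⟨N, hN⟩ := hfin.bddAbove
    have hmeets : ∀ n, N + 1 ≤ n → ∃ k, a n ≤ x k ∧ x k < a (n + 1) := by
      intro n hn
      by_contra hmiss
      push_neg at hmiss
      have : n ∈ {n : ℕ | Set.range x ∩ Set.Ico (a n) (a (n + 1)) = ∅} := by
        simp only [Set.mem_setOf_eq, Set.eq_empty_iff_forall_notMem]
        rintro m ⟨⟨k, rfl⟩, hm1, hm2⟩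
        exact absurd hm2 (not_lt.mpr (hmiss k hm1))
      have := hN this
      omega
    have hkey := key_count a x ha (hX x hx) (N + 1) hmeets
    rw [Filter.eventually_atTop]
    refine ⟨N + 1, fun n hn => ?_⟩
    have h1 : x n < a (N + 1 + n + 1) := hkey n
    have h2 : a (N + 1 + n + 1) ≤ a (2 * n + 1) := ha.monotone (by omega)
    exact le_of_lt (lt_of_lt_of_le h1 h2)
  · intro h
    rintro ⟨g, hg⟩
    set a : ℕ → ℕ := fun n => Nat.rec 0 (fun _ p => max (g p) p + 1) n with ha_def
    have hstep : ∀ n, a (n + 1) = max (g (a n)) (a n) + 1 := fun n => rfl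
    have ha : StrictMono a := strictMono_nat_of_lt_succ (fun n => by
      rw [hstep]; omega)
    obtain ⟨b, hb, x, hx, hdisj⟩ := h a ha
    obtain ⟨N, hN⟩ := Filter.eventually_atTop.mp (hg x hx)
    obtain ⟨m, hmb, hmN⟩ := hb.exists_gt N
    have hxm : x (a m) ∈ Set.range x ∩ ⋃ n ∈ b, Set.Ico (a n) (a (n + 1)) := by
      refine ⟨⟨a m, rfl⟩, ?_⟩
      refine Set.mem_biUnion hmb ?_
      constructor
      · exact (hX x hx).le_apply
      · have h1 : x (a m) ≤ g (a m) := hN (a m) (le_trans hmN.le (ha.le_apply))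
        rw [hstep]
        omega
    rw [hdisj] at hxm
    exact hxm
end

section
/- Assume T = {t_α : α < κ} ⊆ [ℕ]^ω is an unbounded family such that α < β implies t_α ⊇* t_β (a κ-unbounded tower), and f(n) = 2^{n+1} − 1. Define x_α := z_α ∩ ⋃_n [f(t_α(2n)), f(t_α(2n)+1)) ∪ {f(t_α(2n+1)) : n ∈ ℕ} for arbitrary z_α ⊆ ℕ. Then for every increasing a : ℕ → ℕ there exist an infinite b ⊆ ℕ and α < κ such that for all β with α ≤ β < κ, x_β ∩ ⋃_{n∈b}[a(n), a(n+1)) is finite. -/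
lemma unb_char {ι : Type*} (t : ι → ℕ → ℕ) (ht : ∀ α, StrictMono (t α))
    (hunb : ¬ ∃ g : ℕ → ℕ, ∀ α, ∀ᶠ n in Filter.atTop, t α n ≤ g n)
    (a' : ℕ → ℕ) (ha' : StrictMono a') :
    ∃ α, ∃ B : Set ℕ, B.Infinite ∧
      ∀ n ∈ B, ∀ j, t α j ∉ Set.Ico (a' n) (a' (n + 1)) := by
  by_contra h
  push_neg at h
  apply hunb
  refine ⟨fun n => a' (2 * n + 2), fun α => ?_⟩
  have hfin : {n | ∀ j, t α j ∉ Set.Ico (a' n) (a' (n + 1))}.Finite := by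
    rw [← Set.not_infinite]
    intro hinf
    obtain ⟨n, hn, j, hj⟩ := h α _ hinf
    exact hn j hj
  obtain ⟨N, hN⟩ := hfin.bddAbove
  have hsel : ∀ j : ℕ, ∃ m, t α m ∈ Set.Ico (a' (N + 1 + j)) (a' (N + 1 + j + 1)) := by
    intro j
    by_contra hc
    push_neg at hc
    have : N + 1 + j ≤ N := hN (fun m hm => hc m hm)
    omega
  choose m hm using hsel
  have hminj : Function.Injective m := by
    intro i j hij
    by_contra hne
    rcases Nat.lt_or_ge i j with hlt | hge
    · have h1 := (hm i).2
      have h2 := (hm j).1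
      rw [hij] at h1
      exact absurd (lt_of_le_of_lt h2 h1) (not_lt.mpr (ha'.monotone (by omega)))
    · have hlt : j < i := lt_of_le_of_ne hge (Ne.symm hne)
      have h1 := (hm j).2
      have h2 := (hm i).1
      rw [hij] at h2
      exact absurd (lt_of_le_of_lt h2 h1) (not_lt.mpr (ha'.monotone (by omega)))
  filter_upwards [Filter.eventually_ge_atTop (N + 1)] with n hn
  -- find j ≤ n with m j ≥ n
  have hex : ∃ j ∈ Finset.range (n + 1), n ≤ m j := by
    by_contra hc
    push_neg at hc
    have hsub : (Finset.range (n + 1)).image m ⊆ Finset.range n :=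
      Finset.image_subset_iff.mpr (fun j hj => Finset.mem_range.mpr (hc j hj))
    have hcard := Finset.card_le_card hsub
    rw [Finset.card_image_of_injective _ hminj, Finset.card_range, Finset.card_range] at hcard
    omega
  obtain ⟨j, hjmem, hj⟩ := hex
  have hjn : j ≤ n := by have := Finset.mem_range.mp hjmem; omega
  have h1 : t α (m j) < a' (2 * n + 2) :=
    lt_of_lt_of_le (hm j).2 (ha'.monotone (by omega))
  exact le_of_lt (lt_of_le_of_lt ((ht α).monotone hj) h1)

/-- Let `{t_α : α ∈ ι}` be an unbounded tower (identified with increasing enumerations,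
with `α < β → t_α ⊇* t_β`), `f n = 2^{n+1} - 1`, and
`x_α = (z_α ∩ ⋃_n [f(t_α(2n)), f(t_α(2n)+1))) ∪ {f(t_α(2n+1)) : n ∈ ℕ}` for arbitrary
`z_α ⊆ ℕ`. Then for every increasing `a : ℕ → ℕ` there are an infinite `b ⊆ ℕ` and `α`
such that `x_β ∩ ⋃_{n ∈ b} [a(n), a(n+1))` is finite for all `β ≥ α`. -/
theorem stmt_7 {ι : Type*} [LinearOrder ι]
    (t : ι → ℕ → ℕ) (ht : ∀ α, StrictMono (t α))
    (htower : ∀ α β : ι, α < β → (Set.range (t β) \ Set.range (t α)).Finite)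
    (hunb : ¬ ∃ g : ℕ → ℕ, ∀ α, ∀ᶠ n in Filter.atTop, t α n ≤ g n)
    (f : ℕ → ℕ) (hf : ∀ n, f n = 2 ^ (n + 1) - 1)
    (z : ι → Set ℕ) (x : ι → Set ℕ)
    (hx : ∀ α, x α =
      (z α ∩ ⋃ n, Set.Ico (f (t α (2 * n))) (f (t α (2 * n) + 1))) ∪
        {m | ∃ n, m = f (t α (2 * n + 1))}) :
    ∀ a : ℕ → ℕ, StrictMono a →
      ∃ b : Set ℕ, b.Infinite ∧ ∃ α : ι, ∀ β : ι, α ≤ β →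
        (x β ∩ ⋃ n ∈ b, Set.Ico (a n) (a (n + 1))).Finite := by
  intro a ha
  -- basic facts about f
  have hfmono : StrictMono f := by
    intro i j hij
    rw [hf i, hf j]
    have h1 : 2 ^ (i + 1) < 2 ^ (j + 1) := Nat.pow_lt_pow_right one_lt_two (by omega)
    have h2 : 1 ≤ 2 ^ (i + 1) := Nat.one_le_two_pow
    omega
  have hfge : ∀ k, k ≤ f k := fun k => by
    rw [hf k]
    have := Nat.lt_two_pow_self (n := k + 1)
    omega
  -- construct a'
  let a' : ℕ → ℕ := fun n => Nat.rec 0 (fun _ p => max (p + 1) (a (f p + 1))) n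
  have ha'succ : ∀ n, a' (n + 1) = max (a' n + 1) (a (f (a' n) + 1)) := fun n => rfl
  have ha'mono : StrictMono a' := strictMono_nat_of_lt_succ (fun n => by rw [ha'succ]; omega)
  obtain ⟨α, B, hBinf, hB⟩ := unb_char t ht hunb a' ha'mono
  refine ⟨(fun n => f (a' n)) '' B, hBinf.image ((hfmono.comp ha'mono).injective.injOn), α, ?_⟩
  intro β hβ
  -- finite diff set
  have hD : (Set.range (t β) \ Set.range (t α)).Finite := by
    rcases lt_or_eq_of_le hβ with h | h
    · exact htower α β h
    · rw [← h]; simp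
  refine Set.Finite.subset (hD.biUnion (fun k _ => Set.finite_Ico (f k) (f (k + 1)))) ?_
  rintro p ⟨hpx, hpu⟩
  simp only [Set.mem_iUnion] at hpu
  obtain ⟨mm, ⟨nb, hnbB, rfl⟩, hpm⟩ := hpu
  have hpm1 : a (f (a' nb)) ≤ p := hpm.1
  have hpm2 : p < a (f (a' nb) + 1) := hpm.2
  -- p belongs to some block of t β
  have hblock : ∃ k ∈ Set.range (t β), p ∈ Set.Ico (f k) (f (k + 1)) := by
    rw [hx β] at hpx
    rcases hpx with ⟨_, hp2⟩ | hp2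
    · simp only [Set.mem_iUnion] at hp2
      obtain ⟨n, hn⟩ := hp2
      exact ⟨t β (2 * n), Set.mem_range_self _, hn⟩
    · obtain ⟨n, rfl⟩ := hp2
      exact ⟨t β (2 * n + 1), Set.mem_range_self _,
        le_refl _, hfmono (by omega)⟩
  obtain ⟨k, hkβ, hkp⟩ := hblock
  -- show k ∉ range (t α)
  have hklt : k < a' (nb + 1) := by
    by_contra hc
    push_neg at hc
    have : f (a' (nb + 1)) ≤ f k := hfmono.monotone hc
    have h1 : a (f (a' nb) + 1) ≤ a' (nb + 1) := by rw [ha'succ]; omega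
    have h2 : a' (nb + 1) ≤ f (a' (nb + 1)) := hfge _
    have := hkp.1  -- f k ≤ p
    omega
  have hkge : a' nb ≤ k := by
    refine Classical.byContradiction fun hc => ?_
    push_neg at hc
    have h1 : f (k + 1) ≤ f (a' nb) := hfmono.monotone (by omega)
    have h2 : f (a' nb) ≤ a (f (a' nb)) := ha.le_apply
    have := hkp.2  -- p < f (k + 1)
    omega
  have hknα : k ∉ Set.range (t α) := by
    rintro ⟨j, rfl⟩
    exact hB nb hnbB j ⟨hkge, hklt⟩
  exact Set.mem_biUnion ⟨hkβ, hknα⟩ hkp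
end

section
/- For every increasing function a : ℕ → ℕ and a strictly increasing f : ℕ → ℕ, there is an infinite set c ⊆ ℕ such that |[f(c(k)), f(c(k+1))) ∩ range(a)| ≥ 2 for all k; moreover for any infinite d ⊆ range(c)-indices there is an infinite b ⊆ ℕ with ⋃_{n∈b}[a(n), a(n+1)) ⊆ ⋃_{k∈d}[f(c(k)), f(c(k+1))). -/
noncomputable def stmt8G (a f : ℕ → ℕ) (ha : StrictMono a) (m : ℕ) : ℕ :=
  Nat.find (⟨f m, ha.le_apply⟩ : ∃ n, f m ≤ a n)

lemma stmt8G_spec (a f : ℕ → ℕ) (ha : StrictMono a) (m : ℕ) :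
    f m ≤ a (stmt8G a f ha m) :=
  Nat.find_spec (⟨f m, ha.le_apply⟩ : ∃ n, f m ≤ a n)

lemma stmt8G_min (a f : ℕ → ℕ) (ha : StrictMono a) {m n : ℕ}
    (h : n < stmt8G a f ha m) : ¬ f m ≤ a n :=
  Nat.find_min (⟨f m, ha.le_apply⟩ : ∃ n, f m ≤ a n) h

noncomputable def stmt8C (a f : ℕ → ℕ) (ha : StrictMono a) : ℕ → ℕ
  | 0 => 0
  | k + 1 => max (stmt8C a f ha k + 1)
      (a (stmt8G a f ha (stmt8C a f ha k) + 1) + 1)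

/-- For strictly increasing `a, f : ℕ → ℕ` there is an infinite set `c` (given by its
increasing enumeration) with `|[f(c(k)), f(c(k+1))) ∩ range a| ≥ 2` for all `k`; moreover,
for every infinite `d ⊆ ℕ` there is an infinite `b ⊆ ℕ` with
`⋃_{n ∈ b} [a(n), a(n+1)) ⊆ ⋃_{k ∈ d} [f(c(k)), f(c(k+1)))`. -/
theorem stmt_8 (a f : ℕ → ℕ) (ha : StrictMono a) (hf : StrictMono f) :
    ∃ c : ℕ → ℕ, StrictMono c ∧
      (∀ k, 2 ≤ (Set.Ico (f (c k)) (f (c (k + 1))) ∩ Set.range a).ncard) ∧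
      ∀ d : Set ℕ, d.Infinite →
        ∃ b : Set ℕ, b.Infinite ∧
          (⋃ n ∈ b, Set.Ico (a n) (a (n + 1))) ⊆
            ⋃ k ∈ d, Set.Ico (f (c k)) (f (c (k + 1))) := by
  set c := stmt8C a f ha with hc
  set g : ℕ → ℕ := fun k => stmt8G a f ha (c k) with hg
  have hlow : ∀ k, f (c k) ≤ a (g k) := fun k => stmt8G_spec a f ha (c k)
  have hhigh : ∀ k, a (g k + 1) < f (c (k + 1)) := by
    intro k
    have h1 : a (g k + 1) + 1 ≤ c (k + 1) := le_max_right _ _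
    calc a (g k + 1) < c (k + 1) := h1
      _ ≤ f (c (k + 1)) := hf.le_apply
  have hcmono : StrictMono c := by
    apply strictMono_nat_of_lt_succ
    intro k
    have : c k + 1 ≤ c (k + 1) := le_max_left _ _
    omega
  have hgmono : StrictMono g := by
    apply strictMono_nat_of_lt_succ
    intro k
    by_contra h
    push_neg at h
    have : a (g (k + 1)) ≤ a (g k + 1) := ha.monotone (by omega)
    have := hlow (k + 1)
    have := hhigh k
    omega
  refine ⟨c, hcmono, ?_, ?_⟩
  · intro k
    have hsub : {a (g k), a (g k + 1)} ⊆
        Set.Ico (f (c k)) (f (c (k + 1))) ∩ Set.range a := by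
      intro x hx
      rcases hx with rfl | rfl
      · exact ⟨⟨hlow k, lt_of_le_of_lt (ha.monotone (Nat.le_succ _)) (hhigh k)⟩,
          ⟨g k, rfl⟩⟩
      · exact ⟨⟨(hlow k).trans (ha.monotone (Nat.le_succ _)),
          hhigh k⟩, ⟨g k + 1, rfl⟩⟩
    have hfin : (Set.Ico (f (c k)) (f (c (k + 1))) ∩ Set.range a).Finite :=
      (Set.finite_Ico _ _).inter_of_left _
    have hne : a (g k) ≠ a (g k + 1) := (ha (Nat.lt_succ_self _)).ne
    calc 2 = ({a (g k), a (g k + 1)} : Set ℕ).ncard := (Set.ncard_pair hne).symm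
      _ ≤ _ := Set.ncard_le_ncard hsub hfin
  · intro d hd
    refine ⟨g '' d, hd.image (hgmono.injective.injOn), ?_⟩
    intro x hx
    simp only [Set.mem_iUnion] at hx ⊢
    obtain ⟨n, ⟨k, hk, rfl⟩, hxn⟩ := hx
    refine ⟨k, hk, ?_⟩
    simp only [Set.mem_Ico] at hxn ⊢
    exact ⟨le_trans (hlow k) hxn.1, lt_trans hxn.2 (hhigh k)⟩
end

section
/- Let (N_α)_{α<κ} be a κ-indexed family of null sets cofinal in the null ideal of 2^ℕ, where κ = cov(N) = cof(N) is regular. Let S be a κ-Sierpiński set and Y = {y_α : α < κ} ⊆ 2^ℕ. Then there is a κ-Sierpiński set S' with Y ⊆ S ⊕ S'. -/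
open MeasureTheory Cardinal

/-- Coordinatewise addition mod 2 on the Cantor group `2^ℕ`. -/
def cadd (x y : ℕ → Bool) : ℕ → Bool := fun i => xor (x i) (y i)

/-- `μ` is the uniform Bernoulli product measure on `2^ℕ`. -/
def IsBernoulli (μ : Measure (ℕ → Bool)) : Prop :=
  ∀ (s : Finset ℕ) (y : ℕ → Bool),
    μ {x | ∀ i ∈ s, x i = y i} = (2⁻¹ : ENNReal) ^ s.card

/-- `cov(N)`: the least cardinality of a family of null sets covering `2^ℕ`. -/
noncomputable def covNull (μ : Measure (ℕ → Bool)) : Cardinal :=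
  sInf {c : Cardinal | ∃ F : Set (Set (ℕ → Bool)),
    #F = c ∧ (∀ N ∈ F, μ N = 0) ∧ ⋃₀ F = Set.univ}

/-- `cof(N)`: the least cardinality of a cofinal family of null sets. -/
noncomputable def cofNull (μ : Measure (ℕ → Bool)) : Cardinal :=
  sInf {c : Cardinal | ∃ F : Set (Set (ℕ → Bool)),
    #F = c ∧ (∀ N ∈ F, μ N = 0) ∧ ∀ M : Set (ℕ → Bool), μ M = 0 → ∃ N ∈ F, M ⊆ N}

/-- `S` is a `κ`-Sierpiński set: `|S| ≥ κ` and `|S ∩ N| < κ` for every null `N`. -/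
def IsSierpinski (μ : Measure (ℕ → Bool)) (κ : Cardinal) (S : Set (ℕ → Bool)) : Prop :=
  κ ≤ #S ∧ ∀ N : Set (ℕ → Bool), μ N = 0 → #(↥(S ∩ N)) < κ

namespace Stmt9Aux

abbrev C := ℕ → Bool

lemma cadd_cadd (v x : C) : cadd v (cadd v x) = x := by
  funext i; simp [cadd]

lemma cadd_swap (a b : C) : cadd a (cadd b a) = b := by
  funext i; simp [cadd, Bool.xor_comm]

lemma measurable_cadd (v : C) : Measurable (cadd v) := by
  apply measurable_pi_lambda
  intro i
  exact (measurable_from_top (f := fun b => xor (v i) b)).comp (measurable_pi_apply i)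

def cyl (s : Finset ℕ) (z : C) : Set C := {x | ∀ i ∈ s, x i = z i}

def cylSet : Set (Set C) := {A | ∃ s z, A = cyl s z}

lemma cyl_measurableSet (s : Finset ℕ) (z : C) : MeasurableSet (cyl s z) := by
  have h : cyl s z = ⋂ i ∈ s, (fun x : C => x i) ⁻¹' {z i} := by
    ext x; simp [cyl]
  rw [h]
  exact MeasurableSet.biInter s.countable_toSet fun i _ =>
    (measurable_pi_apply i) (measurableSet_singleton _)

lemma generate_eq : (inferInstance : MeasurableSpace C) = .generateFrom cylSet := by
  apply le_antisymm
  · have hev : ∀ i : ℕ, Measurable[MeasurableSpace.generateFrom cylSet] (fun x : C => x i) := by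
      intro i
      refine @measurable_to_countable Bool C _ _ (.generateFrom cylSet)
        (fun x : C => x i) fun x => ?_
      apply MeasurableSpace.measurableSet_generateFrom
      refine ⟨{i}, x, ?_⟩
      ext w; simp [cyl]
    exact iSup_le fun i => measurable_iff_comap_le.mp (hev i)
  · apply MeasurableSpace.generateFrom_le
    rintro A ⟨s, z, rfl⟩
    exact cyl_measurableSet s z

lemma isPiSystem_cylSet : IsPiSystem cylSet := by
  rintro A ⟨s, z, rfl⟩ B ⟨t, w, rfl⟩ hne
  obtain ⟨x, hx1, hx2⟩ := hne
  refine ⟨s ∪ t, x, ?_⟩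
  ext u
  simp only [cyl, Set.mem_inter_iff, Set.mem_setOf_eq, Finset.mem_union] at *
  constructor
  · rintro ⟨h1, h2⟩ i (hi | hi)
    · rw [h1 i hi, hx1 i hi]
    · rw [h2 i hi, hx2 i hi]
  · intro h
    exact ⟨fun i hi => by rw [h i (Or.inl hi), hx1 i hi],
      fun i hi => by rw [h i (Or.inr hi), hx2 i hi]⟩

lemma isProb {μ : Measure C} (hμ : IsBernoulli μ) : IsProbabilityMeasure μ := by
  constructor
  have := hμ ∅ (fun _ => true)
  simpa using this

lemma preimage_cyl (v : C) (s : Finset ℕ) (z : C) :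
    cadd v ⁻¹' cyl s z = cyl s (cadd v z) := by
  have key : ∀ a b c : Bool, (xor a b = c ↔ b = xor a c) := by decide
  ext x
  simp only [cyl, Set.mem_preimage, Set.mem_setOf_eq, cadd]
  exact forall₂_congr fun i _ => key _ _ _

lemma map_cadd {μ : Measure C} (hμ : IsBernoulli μ) (v : C) : μ.map (cadd v) = μ := by
  have hp : IsProbabilityMeasure μ := isProb hμ
  have hp2 : IsProbabilityMeasure (μ.map (cadd v)) :=
    Measure.isProbabilityMeasure_map (measurable_cadd v).aemeasurable
  refine ext_of_generate_finite cylSet generate_eq isPiSystem_cylSet ?_ (by simp)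
  rintro A ⟨s, z, rfl⟩
  rw [Measure.map_apply (measurable_cadd v) (cyl_measurableSet s z), preimage_cyl]
  exact (hμ s _).trans (hμ s z).symm

lemma null_image {μ : Measure C} (hμ : IsBernoulli μ) (v : C) {A : Set C}
    (hA : μ A = 0) : μ (cadd v '' A) = 0 := by
  obtain ⟨B, hAB, hBm, hB0⟩ := exists_measurable_superset_of_null hA
  have hsub : cadd v '' A ⊆ cadd v ⁻¹' B := by
    rintro _ ⟨a, ha, rfl⟩
    simpa [Set.mem_preimage, cadd_cadd] using hAB ha
  have : μ (cadd v ⁻¹' B) = 0 := by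
    rw [← Measure.map_apply (measurable_cadd v) hBm, map_cadd hμ]
    exact hB0
  exact le_antisymm (this ▸ measure_mono hsub) (zero_le)

end Stmt9Aux

/-- If `κ = cov(N) = cof(N)` is regular, `(N_i)` is a `κ`-indexed cofinal family of null
sets, `S` is a `κ`-Sierpiński set and `Y = {y_i}` has cardinality at most `κ`, then there
is a `κ`-Sierpiński set `S'` with `Y ⊆ S ⊕ S'`. -/
theorem stmt_9 (μ : Measure (ℕ → Bool)) (hμ : IsBernoulli μ) (κ : Cardinal)
    (hcov : κ = covNull μ) (hcof : κ = cofNull μ) (hreg : κ.IsRegular)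
    {ι : Type} (hι : #ι = κ) (N : ι → Set (ℕ → Bool)) (hN : ∀ i, μ (N i) = 0)
    (hNcof : ∀ M : Set (ℕ → Bool), μ M = 0 → ∃ i, M ⊆ N i)
    (S : Set (ℕ → Bool)) (hS : IsSierpinski μ κ S) (y : ι → (ℕ → Bool)) :
    ∃ S' : Set (ℕ → Bool), IsSierpinski μ κ S' ∧
      Set.range y ⊆ Set.image2 cadd S S' := by
  classical
  obtain ⟨hS1, hS2⟩ := hS
  have hκinf : ℵ₀ ≤ κ := hreg.aleph0_le
  -- index type of order type κ
  set W := κ.ord.ToType with hW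
  have hWcard : #W = κ := mk_ord_toType κ
  have f : W ≃ ι := (Cardinal.eq.mp (by rw [hWcard, hι])).some
  -- key choice lemma
  have exgood : ∀ (T : Type) (_ : #T < κ) (M : T → Set (ℕ → Bool))
      (_ : ∀ t, μ (M t) = 0) (P : Set (ℕ → Bool)) (_ : #P < κ) (v : ℕ → Bool),
      ∃ z ∈ S, (∀ t, cadd v z ∉ M t) ∧ cadd v z ∉ P := by
    intro T hT M hM P hP v
    set Bad : Set (ℕ → Bool) := (⋃ t, cadd v '' M t) ∪ cadd v '' P with hBad
    have hcard : #(↥(S ∩ Bad)) < κ := by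
      have hsub : S ∩ Bad ⊆ (⋃ t, S ∩ cadd v '' M t) ∪ cadd v '' P := by
        rintro z ⟨hzS, hzB | hzB⟩
        · obtain ⟨t, ht⟩ := Set.mem_iUnion.mp hzB
          exact Or.inl (Set.mem_iUnion.mpr ⟨t, hzS, ht⟩)
        · exact Or.inr hzB
      refine lt_of_le_of_lt (Cardinal.mk_le_mk_of_subset hsub) ?_
      refine lt_of_le_of_lt (Cardinal.mk_union_le _ _) ?_
      refine Cardinal.add_lt_of_lt hκinf ?_ (lt_of_le_of_lt (Cardinal.mk_image_le) hP)
      refine lt_of_le_of_lt (Cardinal.mk_iUnion_le _) ?_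
      refine Cardinal.mul_lt_of_lt hκinf hT ?_
      exact Cardinal.iSup_lt_of_isRegular hreg hT fun t =>
        hS2 _ (Stmt9Aux.null_image hμ v (hM t))
    have hnot : ¬ S ⊆ Bad := by
      intro h
      have : #S ≤ #(↥(S ∩ Bad)) :=
        Cardinal.mk_le_mk_of_subset (Set.subset_inter Set.Subset.rfl h)
      exact absurd (lt_of_le_of_lt (hS1.trans this) hcard) (lt_irrefl κ)
    obtain ⟨z, hzS, hzB⟩ := Set.not_subset.mp hnot
    refine ⟨z, hzS, ?_, ?_⟩
    · intro t ht
      exact hzB (Or.inl (Set.mem_iUnion.mpr ⟨t, ⟨cadd v z, ht, Stmt9Aux.cadd_cadd v z⟩⟩))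
    · intro ht
      exact hzB (Or.inr ⟨cadd v z, ht, Stmt9Aux.cadd_cadd v z⟩)
  have hIio : ∀ b : W, #{c : W // c < b} < κ := fun b => Cardinal.mk_Iio_ord_toType b
  -- transfinite construction
  let x : W → (ℕ → Bool) := WellFounded.fix wellFounded_lt fun b prev =>
    cadd (y (f b)) (Classical.choose (exgood {c : W // c < b} (hIio b)
      (fun t => N (f t.1)) (fun t => hN _)
      (Set.range fun t : {c : W // c < b} => prev t.1 t.2)
      (lt_of_le_of_lt Cardinal.mk_range_le (hIio b)) (y (f b))))
  have hprop : ∀ b : W, ∃ z ∈ S, x b = cadd (y (f b)) z ∧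
      (∀ c, c < b → x b ∉ N (f c)) ∧ ∀ c, c < b → x b ≠ x c := by
    intro b
    have hxb : x b = cadd (y (f b)) (Classical.choose (exgood {c : W // c < b} (hIio b)
        (fun t => N (f t.1)) (fun t => hN _)
        (Set.range fun t : {c : W // c < b} => x t.1)
        (lt_of_le_of_lt Cardinal.mk_range_le (hIio b)) (y (f b)))) :=
      WellFounded.fix_eq _ _ _
    obtain ⟨hzS, hz2, hz3⟩ := Classical.choose_spec (exgood {c : W // c < b} (hIio b)
        (fun t => N (f t.1)) (fun t => hN _)
        (Set.range fun t : {c : W // c < b} => x t.1)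
        (lt_of_le_of_lt Cardinal.mk_range_le (hIio b)) (y (f b)))
    refine ⟨_, hzS, hxb, ?_, ?_⟩
    · intro c hc h
      exact hz2 ⟨c, hc⟩ (hxb ▸ h)
    · intro c hc h
      refine hz3 ⟨⟨c, hc⟩, ?_⟩
      show x c = cadd (y (f b)) _
      rw [← h]
      exact hxb
  have hinj : Function.Injective x := by
    intro a b h
    by_contra hne
    rcases lt_or_gt_of_ne hne with hlt | hlt
    · obtain ⟨z, _, _, _, h5⟩ := hprop b
      exact h5 a hlt h.symm
    · obtain ⟨z, _, _, _, h5⟩ := hprop a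
      exact h5 b hlt h
  refine ⟨Set.range x, ⟨?_, ?_⟩, ?_⟩
  · rw [Cardinal.mk_range_eq x hinj, hWcard]
  · intro M hM0
    obtain ⟨i, hMN⟩ := hNcof M hM0
    have hsub : Set.range x ∩ M ⊆ x '' Set.Iic (f.symm i) := by
      rintro p ⟨⟨b, rfl⟩, hpM⟩
      refine ⟨b, ?_, rfl⟩
      by_contra hb
      obtain ⟨z, _, _, h4, _⟩ := hprop b
      exact h4 (f.symm i) (lt_of_not_ge hb)
        (by rw [Equiv.apply_symm_apply]; exact hMN hpM)
    refine lt_of_le_of_lt (Cardinal.mk_le_mk_of_subset hsub) ?_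
    refine lt_of_le_of_lt Cardinal.mk_image_le ?_
    have : Set.Iic (f.symm i) = insert (f.symm i) (Set.Iio (f.symm i)) :=
      (Set.Iio_insert).symm
    rw [this]
    refine lt_of_le_of_lt (Cardinal.mk_insert_le) ?_
    exact Cardinal.add_lt_of_lt hκinf (Cardinal.mk_Iio_ord_toType _)
      (lt_of_lt_of_le Cardinal.one_lt_aleph0 hκinf)
  · rintro p ⟨i, rfl⟩
    obtain ⟨z, hzS, hxb, _, _⟩ := hprop (f.symm i)
    refine Set.mem_image2.mpr ⟨z, hzS, x (f.symm i), Set.mem_range_self _, ?_⟩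
    rw [hxb, Equiv.apply_symm_apply]
    exact Stmt9Aux.cadd_swap z (y i)
end

section
/- Every d-Sierpiński set S ⊆ 2^ℕ satisfies S₁(Γ_B, Ω_B): for every sequence (𝒰_n) of countable Borel γ-covers of S, one can select U_n ∈ 𝒰_n so that {U_n : n ∈ ℕ} is an ω-cover of S. -/
open MeasureTheory Cardinal

/-- The dominating number `𝔡`. -/
noncomputable def domNumber : Cardinal :=
  sInf {c : Cardinal | ∃ D : Set (ℕ → ℕ),
    #D = c ∧ ∀ f : ℕ → ℕ, ∃ g ∈ D, ∀ᶠ n in Filter.atTop, f n ≤ g n}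


lemma dom_not_countable (D : Set (ℕ → ℕ))
    (hD : ∀ f : ℕ → ℕ, ∃ g ∈ D, ∀ᶠ n in Filter.atTop, f n ≤ g n)
    (hc : D.Countable) : False := by
  rcases D.eq_empty_or_nonempty with rfl | hne
  · obtain ⟨g, hg, -⟩ := hD 0; exact hg
  obtain ⟨e, rfl⟩ := hc.exists_eq_range hne
  set f : ℕ → ℕ := fun n => (Finset.range (n + 1)).sup (fun i => e i n) + 1 with hf
  obtain ⟨g, ⟨i, rfl⟩, hg⟩ := hD f
  obtain ⟨n, hn, hfn⟩ := (hg.and (Filter.eventually_ge_atTop i)).exists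
  have : e i n ≤ (Finset.range (n + 1)).sup (fun j => e j n) :=
    Finset.le_sup (f := fun j => e j n) (Finset.mem_range.2 (Nat.lt_succ_of_le hfn))
  have hb : f n = (Finset.range (n + 1)).sup (fun j => e j n) + 1 := rfl
  omega

lemma aleph0_lt_domNumber : ℵ₀ < domNumber := by
  have hne : {c : Cardinal | ∃ D : Set (ℕ → ℕ),
      #D = c ∧ ∀ f : ℕ → ℕ, ∃ g ∈ D, ∀ᶠ n in Filter.atTop, f n ≤ g n}.Nonempty := by
    refine ⟨#(Set.univ : Set (ℕ → ℕ)), Set.univ, rfl, fun f => ⟨f, Set.mem_univ f, ?_⟩⟩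
    exact Filter.Eventually.of_forall (fun n => le_rfl)
  obtain ⟨D, hDc, hD⟩ := csInf_mem hne
  rw [lt_iff_not_ge]
  intro hle
  exact dom_not_countable D hD (Cardinal.mk_le_aleph0_iff.mp (hDc.symm ▸ hle))

lemma not_dominating_of_lt (D : Set (ℕ → ℕ)) (h : #D < domNumber) :
    ∃ f : ℕ → ℕ, ∀ g ∈ D, ∃ n, g n < f n := by
  by_contra hcon
  push_neg at hcon
  have : domNumber ≤ #D := csInf_le' ⟨D, rfl, fun f => by
    obtain ⟨g, hg, hfg⟩ := hcon f
    exact ⟨g, hg, Filter.Eventually.of_forall hfg⟩⟩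
  exact absurd h (not_lt.2 this)

/-- Every `𝔡`-Sierpiński set `S ⊆ 2^ℕ` satisfies `S₁(Γ_B, Ω_B)`: for every sequence of
countable Borel γ-covers of `S` one can select one member from each so that the selection
is an ω-cover of `S`. -/
theorem stmt_12 (μ : Measure (ℕ → Bool)) (hμ : IsBernoulli μ)
    (S : Set (ℕ → Bool)) (hcard : domNumber ≤ #S)
    (hSier : ∀ N : Set (ℕ → Bool), μ N = 0 → #(↥(S ∩ N)) < domNumber)
    (U : ℕ → ℕ → Set (ℕ → Bool))
    (hBorel : ∀ n m, MeasurableSet (U n m))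
    (hγ : ∀ n, ∀ x ∈ S, ∀ᶠ m in Filter.atTop, x ∈ U n m) :
    ∃ g : ℕ → ℕ, ∀ F : Set (ℕ → Bool), F ⊆ S → F.Finite → ∃ n, F ⊆ U n (g n) := by
  classical
  -- total measure is 1
  have hμuniv : μ Set.univ = 1 := by
    have h0 := hμ ∅ (fun _ => false)
    simpa using h0
  have hfin : ∀ A : Set (ℕ → Bool), μ A ≠ ⊤ := by
    intro A
    have : μ A ≤ 1 := hμuniv ▸ measure_mono (Set.subset_univ A)
    exact ne_top_of_le_ne_top ENNReal.one_ne_top this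
  -- the sets B n m
  set B : ℕ → ℕ → Set (ℕ → Bool) := fun n m => ⋂ j, ⋂ _ : m ≤ j, U n j with hB
  have hBmeas : ∀ n m, MeasurableSet (B n m) :=
    fun n m => MeasurableSet.iInter fun j => MeasurableSet.iInter fun _ => hBorel n j
  have hBmono : ∀ n, Monotone (B n) := by
    intro n m m' hmm'
    exact Set.iInter₂_mono' fun j hj => ⟨j, le_trans hmm' hj, le_rfl⟩
  have hBsub : ∀ n m j, m ≤ j → B n m ⊆ U n j := by
    intro n m j hj x hx
    exact Set.mem_iInter₂.mp hx j hj
  -- the exceptional set Z, disjoint from S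
  set Z : Set (ℕ → Bool) := ⋃ n, (⋃ m, B n m)ᶜ with hZ
  have hZmeas : MeasurableSet Z :=
    MeasurableSet.iUnion fun n => (MeasurableSet.iUnion fun m => hBmeas n m).compl
  have hSZ : ∀ x ∈ S, x ∉ Z := by
    intro x hx hxZ
    obtain ⟨n, hn⟩ := Set.mem_iUnion.mp hxZ
    obtain ⟨M, hM⟩ := Filter.eventually_atTop.mp (hγ n x hx)
    exact hn (Set.mem_iUnion.mpr ⟨M, Set.mem_iInter₂.mpr fun j hj => hM j hj⟩)
  -- the small sets s n m := (B n m ∪ Z)ᶜ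
  set s : ℕ → ℕ → Set (ℕ → Bool) := fun n m => (B n m ∪ Z)ᶜ with hs
  have hsmeas : ∀ n m, MeasurableSet (s n m) := fun n m => ((hBmeas n m).union hZmeas).compl
  have hsanti : ∀ n, Antitone (s n) := fun n m m' hmm' =>
    Set.compl_subset_compl.mpr (Set.union_subset_union_left Z (hBmono n hmm'))
  have hsint : ∀ n, (⋂ m, s n m) = ∅ := by
    intro n
    rw [Set.eq_empty_iff_forall_notMem]
    intro x hx
    by_cases hxZ : x ∈ Z
    · exact (Set.mem_iInter.mp hx 0) (Set.mem_union_right _ hxZ)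
    · have hxB : x ∈ (⋃ m, B n m)ᶜ → x ∈ Z := fun h => Set.mem_iUnion.mpr ⟨n, h⟩
      have : x ∉ (⋃ m, B n m)ᶜ := fun h => hxZ (hxB h)
      obtain ⟨m, hm⟩ := Set.mem_iUnion.mp (not_not.mp (by simpa using this))
      exact (Set.mem_iInter.mp hx m) (Set.mem_union_left _ hm)
  have htend : ∀ n, Filter.Tendsto (fun m => μ (s n m)) Filter.atTop (nhds 0) := by
    intro n
    have := tendsto_measure_iInter_atTop (μ := μ) (s := s n)
      (fun m => (hsmeas n m).nullMeasurableSet) (hsanti n) ⟨0, hfin _⟩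
    rw [hsint n] at this
    simpa [Function.comp_def] using this
  -- choose m0 n k with small measure
  have hm0 : ∀ n k, ∃ m, μ (s n m) ≤ (2⁻¹ : ENNReal) ^ (n + k) := by
    intro n k
    have hpos : (0 : ENNReal) < (2⁻¹ : ENNReal) ^ (n + k) := by
      apply ENNReal.pow_pos; norm_num
    obtain ⟨m, hm⟩ := ((htend n).eventually (gt_mem_nhds hpos)).exists
    exact ⟨m, le_of_lt hm⟩
  choose m0 hm0' using hm0
  set h : ℕ → ℕ → ℕ := fun k n => (Finset.range (k + 1)).sup (m0 n) with hh
  have hhmono : ∀ k k', k ≤ k' → ∀ n, h k n ≤ h k' n := by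
    intro k k' hkk' n
    exact Finset.sup_mono (Finset.range_subset_range.mpr (by omega))
  have hhle : ∀ k n, m0 n k ≤ h k n := fun k n =>
    Finset.le_sup (Finset.mem_range.mpr (Nat.lt_succ_self k))
  have hbound : ∀ k n, μ (s n (h k n)) ≤ (2⁻¹ : ENNReal) ^ (n + k) :=
    fun k n => le_trans (measure_mono (hsanti n (hhle k n))) (hm0' n k)
  -- the null sets
  set Nk : ℕ → Set (ℕ → Bool) := fun k => ⋃ n, s n (h k n) with hNk
  have hNkanti : ∀ k k', k ≤ k' → Nk k' ⊆ Nk k := by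
    intro k k' hkk'
    exact Set.iUnion_mono fun n => hsanti n (hhmono k k' hkk' n)
  have hNkbound : ∀ k, μ (Nk k) ≤ 2 * (2⁻¹ : ENNReal) ^ k := by
    intro k
    calc μ (Nk k) ≤ ∑' n, μ (s n (h k n)) := measure_iUnion_le _
      _ ≤ ∑' n, (2⁻¹ : ENNReal) ^ (n + k) := ENNReal.tsum_le_tsum (fun n => hbound k n)
      _ = 2 * (2⁻¹ : ENNReal) ^ k := by
          simp_rw [pow_add]
          rw [ENNReal.tsum_mul_right, ENNReal.tsum_geometric]
          rw [ENNReal.one_sub_inv_two, inv_inv]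
  set N : Set (ℕ → Bool) := ⋂ k, Nk k with hN
  have hN0 : μ N = 0 := by
    have hle : ∀ k, μ N ≤ 2 * (2⁻¹ : ENNReal) ^ k :=
      fun k => le_trans (measure_mono (Set.iInter_subset _ k)) (hNkbound k)
    have htend2 : Filter.Tendsto (fun k => 2 * (2⁻¹ : ENNReal) ^ k) Filter.atTop (nhds 0) := by
      have := ENNReal.Tendsto.const_mul
        (ENNReal.tendsto_pow_atTop_nhds_zero_of_lt_one
          (by norm_num : (2⁻¹ : ENNReal) < 1)) (Or.inr (ENNReal.ofNat_ne_top : (2 : ENNReal) ≠ ⊤))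
      simpa using this
    exact le_antisymm (ge_of_tendsto' htend2 hle) zero_le
  -- the small part of S
  set T : Set (ℕ → Bool) := S ∩ N with hT
  have hTcard : #(↥T) < domNumber := hSier N hN0
  -- the functions fx
  set fx : (ℕ → Bool) → ℕ → ℕ := fun x n =>
    if hx : ∃ M, ∀ m ≥ M, x ∈ U n m then hx.choose else 0 with hfx
  have hfx' : ∀ x ∈ S, ∀ n, ∀ m, fx x n ≤ m → x ∈ U n m := by
    intro x hx n m hm
    have hex : ∃ M, ∀ j ≥ M, x ∈ U n j := Filter.eventually_atTop.mp (hγ n x hx)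
    have : fx x n = hex.choose := by rw [hfx]; simp [hex]
    exact hex.choose_spec m (this ▸ hm)
  -- the candidate dominating family
  set d : ℕ × Finset ↥T → (ℕ → ℕ) :=
    fun p n => max (h p.1 n) (p.2.sup (fun y => fx ↑y n)) with hd
  have hDcard : #(Set.range d) < domNumber := by
    refine lt_of_le_of_lt Cardinal.mk_range_le ?_
    have h1 : #(Finset ↥T) ≤ max (#(↥T)) ℵ₀ := by
      by_cases hI : Infinite ↥T
      · rw [mk_finset_of_infinite]; exact le_max_left _ _
      · have : Finite ↥T := not_infinite_iff_finite.mp hI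
        exact le_trans Cardinal.mk_le_aleph0 (le_max_right _ _)
    have h2 : #(ℕ × Finset ↥T) = ℵ₀ * #(Finset ↥T) := by
      rw [Cardinal.mk_prod, Cardinal.lift_id, Cardinal.lift_id, Cardinal.mk_nat]
    rw [h2]
    calc ℵ₀ * #(Finset ↥T) ≤ ℵ₀ * max (#(↥T)) ℵ₀ :=
          mul_le_mul_right h1 _
      _ = max (#(↥T)) ℵ₀ := by
          rw [Cardinal.mul_eq_max (le_refl ℵ₀) (le_max_right _ _)]
          exact max_eq_right (le_max_right _ _)
      _ < domNumber := max_lt hTcard aleph0_lt_domNumber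
  obtain ⟨g, hg⟩ := not_dominating_of_lt (Set.range d) hDcard
  refine ⟨g, ?_⟩
  intro F hFS hFfin
  -- choose K uniform for F \ N
  set kf : (ℕ → Bool) → ℕ := fun x => if hx : ∃ k, x ∉ Nk k then hx.choose else 0 with hkf
  set K : ℕ := hFfin.toFinset.sup kf with hK
  have hKspec : ∀ x ∈ F, x ∉ N → x ∉ Nk K := by
    intro x hxF hxN
    have hex : ∃ k, x ∉ Nk k := by
      by_contra hcon; push_neg at hcon
      exact hxN (Set.mem_iInter.mpr hcon)
    have h1 : x ∉ Nk (kf x) := by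
      have : kf x = hex.choose := by rw [hkf]; simp [hex]
      exact this ▸ hex.choose_spec
    have h2 : kf x ≤ K := Finset.le_sup (hFfin.mem_toFinset.mpr hxF)
    exact fun hc => h1 (hNkanti (kf x) K h2 hc)
  -- the finite set of F-points in T, as a Finset of ↥T
  have hfinpre : {y : ↥T | ↑y ∈ F}.Finite :=
    hFfin.preimage (Set.injOn_of_injective Subtype.coe_injective)
  set A : Finset ↥T := hfinpre.toFinset with hA
  obtain ⟨n, hn⟩ := hg (d (K, A)) (Set.mem_range_self _)
  refine ⟨n, ?_⟩
  intro x hxF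
  have hxS : x ∈ S := hFS hxF
  by_cases hxN : x ∈ N
  · -- x ∈ T: use the sup over A
    have hy : (⟨x, hxS, hxN⟩ : ↥T) ∈ A := hfinpre.mem_toFinset.mpr hxF
    have h1 : fx x n ≤ A.sup (fun y => fx ↑y n) :=
      Finset.le_sup (s := A) (f := fun y => fx (↑y : ℕ → Bool) n) hy
    have h2 : fx x n ≤ g n := by
      have := le_trans h1 (le_max_right (h K n) _)
      exact le_of_lt (lt_of_le_of_lt this hn)
    exact hfx' x hxS n (g n) h2
  · -- x ∉ N: x ∈ B n (h K n)
    have hxNk : x ∉ Nk K := hKspec x hxF hxN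
    have hxs : x ∉ s n (h K n) := fun hc => hxNk (Set.mem_iUnion.mpr ⟨n, hc⟩)
    have hxB : x ∈ B n (h K n) := by
      have hmem : x ∈ B n (h K n) ∪ Z := not_not.mp hxs
      rcases hmem with hB' | hZ'
      · exact hB'
      · exact absurd hZ' (hSZ x hxS)
    have h2 : h K n ≤ g n :=
      le_of_lt (lt_of_le_of_lt (le_trans (le_max_left _ _) le_rfl) hn)
    exact hBsub n (h K n) (g n) h2 hxB
end

section
/- If X ⊆ 2^ℕ satisfies S₁(Γ, O) (for every sequence of open γ-covers one can select one set from each to obtain a cover), then X is totally imperfect: X contains no uncountable compact subset. -/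
/-- `𝒱` is an open γ-cover of the set `X ⊆ 2^ℕ`: an infinite family of open subsets of
`2^ℕ` such that every point of `X` belongs to all but finitely many members. -/
def GammaCoverOf (X : Set (ℕ → Bool)) (𝒱 : Set (Set (ℕ → Bool))) : Prop :=
  𝒱.Infinite ∧ (∀ V ∈ 𝒱, IsOpen V) ∧ ∀ x ∈ X, {V ∈ 𝒱 | x ∉ V}.Finite

/-- The combinatorial pieces: `z ∈ badSet n k` iff in the "`n`-th block" of `z`
(coordinates `Nat.pair n j`), the first `false` occurs exactly at position `k`. -/
def badSet (n k : ℕ) : Set (ℕ → Bool) :=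
  {z | (∀ j < k, z (Nat.pair n j) = true) ∧ z (Nat.pair n k) = false}

lemma badSet_closed (n k : ℕ) : IsClosed (badSet n k) := by
  have h1 : badSet n k =
      (⋂ j ∈ Set.Iio k, {z : ℕ → Bool | z (Nat.pair n j) = true}) ∩
        {z : ℕ → Bool | z (Nat.pair n k) = false} := by
    ext z; simp [badSet]
  rw [h1]
  apply IsClosed.inter
  · apply isClosed_biInter
    intro j _
    exact isClosed_eq (continuous_apply (Nat.pair n j)) continuous_const
  · exact isClosed_eq (continuous_apply (Nat.pair n k)) continuous_const

lemma badSet_unique {n k k' : ℕ} {z : ℕ → Bool} (h : z ∈ badSet n k)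
    (h' : z ∈ badSet n k') : k = k' := by
  rcases lt_trichotomy k k' with hlt | heq | hgt
  · have := h'.1 k hlt
    rw [h.2] at this; exact absurd this (by simp)
  · exact heq
  · have := h.1 k' hgt
    rw [h'.2] at this; exact absurd this (by simp)

lemma badSet_mem (g : ℕ → ℕ) (n : ℕ) :
    (fun i => decide ((Nat.unpair i).2 < g (Nat.unpair i).1)) ∈ badSet n (g n) := by
  constructor
  · intro j hj
    simp [Nat.unpair_pair, hj]
  · simp [Nat.unpair_pair]

/-- If `X ⊆ 2^ℕ` satisfies `S₁(Γ, O)`, then `X` is totally imperfect: every compact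
subset of `X` is countable. -/
theorem stmt_16 (X : Set (ℕ → Bool))
    (hX : ∀ 𝒰 : ℕ → Set (Set (ℕ → Bool)), (∀ n, GammaCoverOf X (𝒰 n)) →
      ∃ U : ℕ → Set (ℕ → Bool), (∀ n, U n ∈ 𝒰 n) ∧ X ⊆ ⋃ n, U n) :
    ∀ K ⊆ X, IsCompact K → K.Countable := by
  intro K hKX hK
  by_contra hunc
  -- get a continuous injection from Cantor space into K
  haveI : PolishSpace Bool := inferInstance
  obtain ⟨f, hfK, hfc, hfi⟩ := hK.isClosed.exists_nat_bool_injection_of_not_countable hunc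
  -- the image pieces
  set E : ℕ → ℕ → Set (ℕ → Bool) := fun n k => f '' badSet n k with hE
  have hEclosed : ∀ n k, IsClosed (E n k) :=
    fun n k => (((badSet_closed n k).isCompact).image hfc).isClosed
  -- the γ-covers
  set 𝒰 : ℕ → Set (Set (ℕ → Bool)) := fun n => Set.range (fun k => (E n k)ᶜ) with h𝒰
  have hcov : ∀ n, GammaCoverOf X (𝒰 n) := by
    intro n
    refine ⟨?_, ?_, ?_⟩
    · -- infinite
      apply Set.infinite_range_of_injective
      intro k k' hkk'
      have hkk2 : E n k = E n k' := by
        have := congrArg compl hkk'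
        simpa using this
      have hne : (badSet n k).Nonempty :=
        ⟨_, badSet_mem (fun m => k) n⟩
      obtain ⟨z, hz⟩ := hne
      have hz' : f z ∈ E n k' := hkk2 ▸ ⟨z, hz, rfl⟩
      obtain ⟨z', hz', hfz'⟩ := hz'
      have : z' = z := hfi hfz'
      subst this
      exact badSet_unique hz hz'
    · -- open
      rintro V ⟨k, rfl⟩
      exact (hEclosed n k).isOpen_compl
    · -- γ-property: each x misses at most one member
      intro x _
      apply Set.Subsingleton.finite
      rintro V₁ ⟨⟨k₁, rfl⟩, hx₁⟩ V₂ ⟨⟨k₂, rfl⟩, hx₂⟩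
      simp only [Set.mem_compl_iff, not_not] at hx₁ hx₂
      obtain ⟨z₁, hz₁, rfl⟩ := hx₁
      obtain ⟨z₂, hz₂, hz₂'⟩ := hx₂
      have : z₂ = z₁ := hfi hz₂'
      subst this
      rw [badSet_unique hz₁ hz₂]
  obtain ⟨U, hU, hUcov⟩ := hX 𝒰 hcov
  -- extract the chosen indices
  choose g hg using fun n => hU n
  -- the diagonal point avoiding all chosen sets
  set z : ℕ → Bool := fun i => decide ((Nat.unpair i).2 < g (Nat.unpair i).1) with hzdef
  have hzX : f z ∈ X := hKX (hfK ⟨z, rfl⟩)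
  obtain ⟨_, ⟨n, rfl⟩, hmem⟩ := hUcov hzX
  have : f z ∈ E n (g n) := ⟨z, badSet_mem g n, rfl⟩
  have hmem' : f z ∈ U n := hmem
  rw [← hg n] at hmem'
  exact hmem' this
end

section
/- The Cantor space 2^ℕ does not satisfy S₁(Γ, O): there is a sequence (𝒰_n) of open γ-covers of 2^ℕ such that no selection U_n ∈ 𝒰_n covers 2^ℕ. -/
open Set

/-- The closed set of points whose coordinates on the `n`-th block follow pattern `m`. -/
def Kset (n m : ℕ) : Set (ℕ → Bool) :=
  {x | ∀ k, x (Nat.pair n k) = decide (k < m)}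

def Wset (n m : ℕ) : Set (ℕ → Bool) := (Kset n m)ᶜ

lemma Kset_closed (n m : ℕ) : IsClosed (Kset n m) := by
  have h : Kset n m = ⋂ k, {x : ℕ → Bool | x (Nat.pair n k) = decide (k < m)} := by
    ext x; simp [Kset]
  rw [h]
  exact isClosed_iInter fun k => isClosed_eq (continuous_apply _) continuous_const

lemma witness_mem_Kset (n m : ℕ) :
    (fun j => decide ((Nat.unpair j).2 < m)) ∈ Kset n m := by
  intro k; simp [Nat.unpair_pair]

lemma Kset_eq_of_mem {n m m' : ℕ} {x : ℕ → Bool}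
    (h : x ∈ Kset n m) (h' : x ∈ Kset n m') : m = m' := by
  by_contra hne
  rcases Nat.lt_or_ge m m' with hlt | hge
  · have h1 := h m
    have h2 := h' m
    rw [h1] at h2
    simp [hlt] at h2
  · have hlt : m' < m := lt_of_le_of_ne hge (Ne.symm hne)
    have h1 := h m'
    have h2 := h' m'
    rw [h1] at h2
    simp [hlt] at h2

lemma Wset_inj (n : ℕ) : Function.Injective (Wset n) := by
  intro m m' h
  have hK : Kset n m = Kset n m' := by
    have := congrArg compl h
    simpa [Wset] using this
  exact Kset_eq_of_mem (witness_mem_Kset n m) (hK ▸ witness_mem_Kset n m)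

/-- The Cantor space `2^ℕ` does not satisfy `S₁(Γ, O)`: there is a sequence of open
γ-covers (infinite families of proper open subsets, each point belonging to all but
finitely many members) admitting no selection that covers `2^ℕ`. -/
theorem stmt_17 :
    ∃ 𝒰 : ℕ → Set (Set (ℕ → Bool)),
      (∀ n, (𝒰 n).Infinite ∧ (∀ U ∈ 𝒰 n, IsOpen U ∧ U ≠ Set.univ) ∧
        ∀ x : ℕ → Bool, {U ∈ 𝒰 n | x ∉ U}.Finite) ∧
      ∀ U : ℕ → Set (ℕ → Bool), (∀ n, U n ∈ 𝒰 n) → (⋃ n, U n) ≠ Set.univ := by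
  refine ⟨fun n => Set.range (Wset n), fun n => ⟨?_, ?_, ?_⟩, ?_⟩
  · exact Set.infinite_range_of_injective (Wset_inj n)
  · rintro U ⟨m, rfl⟩
    refine ⟨(Kset_closed n m).isOpen_compl, ?_⟩
    intro hU
    have : (fun j => decide ((Nat.unpair j).2 < m)) ∈ Wset n m := by
      rw [hU]; trivial
    exact this (witness_mem_Kset n m)
  · intro x
    have hsub : {U ∈ Set.range (Wset n) | x ∉ U} ⊆ Wset n '' {m | x ∈ Kset n m} := by
      rintro U ⟨⟨m, rfl⟩, hx⟩
      exact ⟨m, by simpa [Wset] using hx, rfl⟩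
    refine Set.Finite.subset (Set.Finite.image _ ?_) hsub
    rcases Set.eq_empty_or_nonempty {m | x ∈ Kset n m} with he | ⟨m₀, hm₀⟩
    · simp [he]
    · have : {m | x ∈ Kset n m} ⊆ {m₀} := fun m hm => Kset_eq_of_mem hm hm₀
      exact Set.Finite.subset (Set.finite_singleton m₀) this
  · intro U hU hcov
    choose m hm using fun n => hU n
    set z : ℕ → Bool := fun j => decide ((Nat.unpair j).2 < m (Nat.unpair j).1) with hz
    have hzK : ∀ n, z ∈ Kset n (m n) := by
      intro n k; simp [hz, Nat.unpair_pair]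
    have : z ∈ ⋃ n, U n := hcov ▸ Set.mem_univ z
    rcases Set.mem_iUnion.mp this with ⟨n, hn⟩
    rw [← hm n] at hn
    exact hn (hzK n)
end

section
/- If x ⊆ ℕ is infinite with increasing enumeration x(1) < x(2) < …, f is increasing with f(n) ≤ x(n+1) eventually, and (U_n) is a sequence of subsets of 2^ℕ such that for every n and every y: y ∩ [f(n), x(n+1)) ⊆ {x(1), x(1)+1, …, x(n), x(n)+1} implies y ∈ U_{n+1}, then {U_n : n ≥ 2} is a γ-cover of the set {y ⊆ ℕ : y ⊆* x ∪ (x+1)}, i.e., every such y belongs to all but finitely many U_n. -/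
/-- Suppose `x(1) < x(2) < ⋯` is the increasing enumeration of an infinite subset of `ℕ`,
`f` is strictly increasing with `f(n) < x(n+1)` for all `n`, and `(U_n)` is a sequence of
subsets of `2^ℕ` such that for every `n ≥ 1` and every `y`:
`y ∩ [f(n), x(n+1)) ⊆ {x(1), x(1)+1, …, x(n), x(n)+1}` implies `y ∈ U_{n+1}`.
Then every `y` with `y ⊆* x ∪ (x+1)` belongs to all but finitely many `U_n`, i.e.,
`{U_n}` is a γ-cover of `{y : y ⊆* x ∪ (x+1)}`. -/
theorem stmt_19 (x : ℕ → ℕ) (hx : StrictMono x)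
    (f : ℕ → ℕ) (hf : StrictMono f) (hfx : ∀ n, f n < x (n + 1))
    (U : ℕ → Set (ℕ → Bool))
    (hU : ∀ n, 1 ≤ n → ∀ y : ℕ → Bool,
      (∀ i, f n ≤ i → i < x (n + 1) → y i = true →
        ∃ j, 1 ≤ j ∧ j ≤ n ∧ (i = x j ∨ i = x j + 1)) →
      y ∈ U (n + 1)) :
    ∀ y : ℕ → Bool,
      ({i | y i = true} \ {i | ∃ n, 1 ≤ n ∧ (i = x n ∨ i = x n + 1)}).Finite →
      ∀ᶠ n in Filter.atTop, y ∈ U n := by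
  intro y hfin
  obtain ⟨M, hM⟩ := hfin.bddAbove
  rw [Filter.eventually_atTop]
  refine ⟨M + 2, fun n hn => ?_⟩
  obtain ⟨m, rfl⟩ : ∃ m, n = m + 1 := ⟨n - 1, by omega⟩
  apply hU m (by omega)
  intro i hi1 hi2 hyi
  have him : m ≤ f m := hf.le_apply
  have hnotin : i ∉ ({i | y i = true} \ {i | ∃ n, 1 ≤ n ∧ (i = x n ∨ i = x n + 1)}) := by
    intro h
    have := hM h
    omega
  have hex : ∃ j, 1 ≤ j ∧ (i = x j ∨ i = x j + 1) := by
    by_contra hc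
    exact hnotin ⟨hyi, hc⟩
  obtain ⟨j, hj1, hj2⟩ := hex
  refine ⟨j, hj1, ?_, hj2⟩
  have hlt : x j < x (m + 1) := by omega
  exact Nat.lt_succ_iff.mp (hx.lt_iff_lt.mp hlt)
end
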